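/- arXiv:1210.7598 — 5 statements merged into one kernel-verified Lean document; each statement's English description precedes it below -/
import Mathlib

section
/- For 1 ≤ i < j ≤ k and h = 1,2, the Wronskian satisfies the polynomial identity ν_{ij,h}(t) = (a_{i,h} − a_{j,h}) · t² · (∏_{r=1, r≠i,j}^{g−1}(t − a_{r,h}))². -/
open Polynomial Finset

/-- `A_h = ∏_{i=1}^{g-1} a_{i,h}`. -/
noncomputable def Aprod (g : ℕ) (a : ℕ → ℕ → ℂ) (h : ℕ) : ℂ :=
  ∏ i ∈ Finset.Icc 1 (g - 1), a i h

/-- `d_2 = 1`, `d_1 = -A_1/A_2`. -/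
noncomputable def dcoef (g : ℕ) (a : ℕ → ℕ → ℂ) (h : ℕ) : ℂ :=
  if h = 1 then -Aprod g a 1 / Aprod g a 2 else 1

/-- The polynomial `α_{i,h}`: for `1 ≤ i ≤ k = ⌊g/2⌋`,
`α_{i,h}(t) = t·∏_{r≠i}(t − a_{r,h})`; for `k+1 ≤ i ≤ g−1`,
`α_{i,h}(t) = −(d_h a_{i,h}/A_h)·∏_{r≠i}(t − a_{r,h})`. -/
noncomputable def alphaPoly (g : ℕ) (a : ℕ → ℕ → ℂ) (i h : ℕ) : Polynomial ℂ :=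
  if i ≤ g / 2 then
    X * ∏ r ∈ (Finset.Icc 1 (g - 1)).erase i, (X - C (a r h))
  else
    C (-(dcoef g a h * a i h / Aprod g a h)) *
      ∏ r ∈ (Finset.Icc 1 (g - 1)).erase i, (X - C (a r h))

/-- Wronskian `ν_{ij,h} = α_{i,h} α'_{j,h} − α_{j,h} α'_{i,h}`. -/
noncomputable def nuPoly (g : ℕ) (a : ℕ → ℕ → ℂ) (i j h : ℕ) : Polynomial ℂ :=
  alphaPoly g a i h * derivative (alphaPoly g a j h)
    - alphaPoly g a j h * derivative (alphaPoly g a i h)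

/-- Torsion values: for `1 ≤ m ≤ g` (with the convention `a_{g,h} = 0`),
`τ_{ij,m} = α'_{j,1}(a_{m,1})·α'_{i,2}(a_{m,2}) − α'_{i,1}(a_{m,1})·α'_{j,2}(a_{m,2})`;
for `m = g+1`, `τ_{ij,g+1} = c_{j,1}c_{i,2} − c_{i,1}c_{j,2}` where `c_{i,h}` is the
coefficient of `t^{g-2}` in `α_{i,h}`. -/
noncomputable def tauVal (g : ℕ) (a : ℕ → ℕ → ℂ) (i j m : ℕ) : ℂ :=
  if m ≤ g then
    (derivative (alphaPoly g a j 1)).eval (if m = g then 0 else a m 1) *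
        (derivative (alphaPoly g a i 2)).eval (if m = g then 0 else a m 2)
      - (derivative (alphaPoly g a i 1)).eval (if m = g then 0 else a m 1) *
        (derivative (alphaPoly g a j 2)).eval (if m = g then 0 else a m 2)
  else
    (alphaPoly g a j 1).coeff (g - 2) * (alphaPoly g a i 2).coeff (g - 2)
      - (alphaPoly g a i 1).coeff (g - 2) * (alphaPoly g a j 2).coeff (g - 2)

/-- The `(5g−5) × ((g−1)(g−2)/2)` Gaussian matrix: the column indexed by the pair
`(i,j)`, `1 ≤ i < j ≤ g−1`, consists of the `2g−3` coefficients of `ν_{ij,1}`, the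
`2g−3` coefficients of `ν_{ij,2}`, and then `τ_{ij,1}, …, τ_{ij,g+1}`. -/
noncomputable def gaussMatrix (g : ℕ) (a : ℕ → ℕ → ℂ) :
    Matrix (Fin (5 * g - 5))
      {p : Fin g × Fin g // 1 ≤ (p.1 : ℕ) ∧ (p.1 : ℕ) < (p.2 : ℕ)} ℂ :=
  fun r p =>
    if (r : ℕ) < 2 * g - 3 then (nuPoly g a (p.1.1 : ℕ) (p.1.2 : ℕ) 1).coeff (r : ℕ)
    else if (r : ℕ) < 2 * (2 * g - 3) then
      (nuPoly g a (p.1.1 : ℕ) (p.1.2 : ℕ) 2).coeff ((r : ℕ) - (2 * g - 3))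
    else tauVal g a (p.1.1 : ℕ) (p.1.2 : ℕ) ((r : ℕ) - 2 * (2 * g - 3) + 1)

/-- The parameters `a_{1,h}, …, a_{g−1,h}` (`h = 1,2`) are nonzero and pairwise
distinct. -/
def validParams (g : ℕ) (a : ℕ → ℕ → ℂ) : Prop :=
  ∀ h, h = 1 ∨ h = 2 →
    (∀ i ∈ Finset.Icc 1 (g - 1), a i h ≠ 0) ∧
      ∀ i ∈ Finset.Icc 1 (g - 1), ∀ j ∈ Finset.Icc 1 (g - 1), i ≠ j → a i h ≠ a j h

/-! For `i, j ≤ k` both `α_{i,h}` and `α_{j,h}` are `t·Q` times a linear factor, where `Q` is the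
product over `r ≠ i, j`; the Wronskian of `p·u` and `p·v` is `p²` times that of `u` and `v`, and the
Wronskian of two monic linear polynomials is the difference of their roots. -/

namespace Polynomial

variable {R : Type*} [CommRing R]

theorem wronskian_mul_mul (p u v : R[X]) :
    wronskian (p * u) (p * v) = p ^ 2 * wronskian u v := by
  simp only [wronskian, derivative_mul]
  ring

theorem wronskian_X_sub_C (b c : R) : wronskian (X - C b) (X - C c) = C (c - b) := by
  simp only [wronskian, derivative_sub, derivative_X, derivative_C, sub_zero, mul_one, one_mul,
    C_sub]
  ring

end Polynomial

theorem nuPoly_eq_wronskian (g : ℕ) (a : ℕ → ℕ → ℂ) (i j h : ℕ) :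
    nuPoly g a i j h = wronskian (alphaPoly g a i h) (alphaPoly g a j h) := by
  rw [nuPoly, wronskian, mul_comm (derivative _)]

theorem alphaPoly_eq_of_le_half {g : ℕ} (a : ℕ → ℕ → ℂ) (h : ℕ) {i j : ℕ} (hi : i ≤ g / 2)
    (hj : j ∈ Icc 1 (g - 1)) (hji : j ≠ i) :
    alphaPoly g a i h =
      X * (∏ r ∈ ((Icc 1 (g - 1)).erase i).erase j, (X - C (a r h))) * (X - C (a j h)) := by
  rw [alphaPoly, if_pos hi, ← mul_prod_erase _ _ (mem_erase.mpr ⟨hji, hj⟩)]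
  ring

theorem nuPoly_eq_of_le_half_general (g : ℕ) (a : ℕ → ℕ → ℂ) (h : ℕ)
    (i j : ℕ) (hi : 1 ≤ i) (hij : i < j) (hj : j ≤ g / 2) :
    nuPoly g a i j h =
      C (a i h - a j h) * X ^ 2 *
        (∏ r ∈ ((Finset.Icc 1 (g - 1)).erase i).erase j, (X - C (a r h))) ^ 2 := by
  have hiI : i ∈ Icc 1 (g - 1) := mem_Icc.mpr ⟨hi, by omega⟩
  have hjI : j ∈ Icc 1 (g - 1) := mem_Icc.mpr ⟨by omega, by omega⟩
  rw [nuPoly_eq_wronskian, alphaPoly_eq_of_le_half a h (by omega) hjI hij.ne',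
    alphaPoly_eq_of_le_half a h hj hiI hij.ne, erase_right_comm, wronskian_mul_mul,
    wronskian_X_sub_C]
  ring

/-- For `1 ≤ i < j ≤ k = ⌊g/2⌋` and `h = 1,2`,
`ν_{ij,h}(t) = (a_{i,h} − a_{j,h}) · t² · (∏_{r≠i,j}(t − a_{r,h}))²`. -/
theorem nuPoly_eq_of_le_half (g : ℕ) (hg : 3 ≤ g) (a : ℕ → ℕ → ℂ)
    (ha : validParams g a) (h : ℕ) (hh : h = 1 ∨ h = 2)
    (i j : ℕ) (hi : 1 ≤ i) (hij : i < j) (hj : j ≤ g / 2) :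
    nuPoly g a i j h =
      C (a i h - a j h) * X ^ 2 *
        (∏ r ∈ ((Finset.Icc 1 (g - 1)).erase i).erase j, (X - C (a r h))) ^ 2 :=
  nuPoly_eq_of_le_half_general g a h i j hi hij hj
end

section
/- For k+1 ≤ i < j ≤ g−1 and h = 1,2, the Wronskian satisfies the polynomial identity ν_{ij,h}(t) = ((a_{i,h} − a_{j,h}) a_{i,h} a_{j,h} / A_2²) · (∏_{r=1, r≠i,j}^{g−1}(t − a_{r,h}))². -/
open Polynomial Finset

/-!
For `i, j > k` the polynomials `α_{i,h}` and `α_{j,h}` are constant multiples of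
`(t - a_{j,h}) Q` and `(t - a_{i,h}) Q`, where `Q = ∏_{r ≠ i,j} (t - a_{r,h})`. A common factor
leaves the Wronskian as `W(pQ, qQ) = W(p, q) Q²`, and the Wronskian of two linear polynomials
is a constant. The product of the two scalars is `a_{i,h} a_{j,h} (d_h / A_h)²`, and
`(d_h / A_h)² = 1 / A_2²` for both `h = 1, 2`.
-/

namespace Polynomial

variable {R : Type*} [CommRing R]

theorem wronskian_mul_right_mul_right (p q r : R[X]) :
    wronskian (p * r) (q * r) = wronskian p q * r ^ 2 := by
  simp only [wronskian, derivative_mul]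
  ring

theorem wronskian_C_mul_X_sub_C (c d x y : R) :
    wronskian (C c * (X - C x)) (C d * (X - C y)) = C (c * d * (y - x)) := by
  simp only [wronskian, derivative_mul, derivative_C, derivative_X, map_mul, map_sub]
  ring

end Polynomial

theorem alphaPoly_of_half_lt {g i : ℕ} (a : ℕ → ℕ → ℂ) (h : ℕ) (hi : g / 2 < i) :
    alphaPoly g a i h = C (-(dcoef g a h * a i h / Aprod g a h)) *
      ∏ r ∈ (Icc 1 (g - 1)).erase i, (X - C (a r h)) :=
  if_neg hi.not_ge

theorem Aprod_ne_zero {g : ℕ} {a : ℕ → ℕ → ℂ} (ha : validParams g a) {h : ℕ}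
    (hh : h = 1 ∨ h = 2) : Aprod g a h ≠ 0 :=
  prod_ne_zero_iff.mpr (ha h hh).1

theorem dcoef_div_Aprod_sq {g : ℕ} {a : ℕ → ℕ → ℂ} (hA : Aprod g a 1 ≠ 0) {h : ℕ}
    (hh : h = 1 ∨ h = 2) : (dcoef g a h / Aprod g a h) ^ 2 = 1 / Aprod g a 2 ^ 2 := by
  rcases hh with rfl | rfl
  · rw [dcoef, if_pos rfl]
    field_simp
  · simp [dcoef]

theorem nuPoly_eq_of_half_lt_general (g : ℕ) (a : ℕ → ℕ → ℂ)
    (ha : validParams g a) (h : ℕ) (hh : h = 1 ∨ h = 2)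
    (i j : ℕ) (hi : g / 2 + 1 ≤ i) (hij : i < j) (hj : j ≤ g - 1) :
    nuPoly g a i j h =
      C ((a i h - a j h) * a i h * a j h / (Aprod g a 2) ^ 2) *
        (∏ r ∈ ((Finset.Icc 1 (g - 1)).erase i).erase j, (X - C (a r h))) ^ 2 := by
  set Q := ∏ r ∈ ((Icc 1 (g - 1)).erase i).erase j, (X - C (a r h))
  have hj_mem : j ∈ (Icc 1 (g - 1)).erase i :=
    mem_erase.mpr ⟨hij.ne', mem_Icc.mpr ⟨by omega, hj⟩⟩
  have hi_mem : i ∈ (Icc 1 (g - 1)).erase j :=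
    mem_erase.mpr ⟨hij.ne, mem_Icc.mpr ⟨by omega, by omega⟩⟩
  have hprod_i : ∏ r ∈ (Icc 1 (g - 1)).erase i, (X - C (a r h)) = (X - C (a j h)) * Q :=
    (mul_prod_erase _ _ hj_mem).symm
  have hprod_j : ∏ r ∈ (Icc 1 (g - 1)).erase j, (X - C (a r h)) = (X - C (a i h)) * Q := by
    rw [← mul_prod_erase _ _ hi_mem, erase_right_comm]
  have hconst : -(dcoef g a h * a i h / Aprod g a h) * -(dcoef g a h * a j h / Aprod g a h) *
      (a i h - a j h) = (a i h - a j h) * a i h * a j h / Aprod g a 2 ^ 2 := by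
    have hsq := dcoef_div_Aprod_sq (Aprod_ne_zero ha (Or.inl rfl)) hh
    linear_combination (a i h - a j h) * a i h * a j h * hsq
  rw [nuPoly_eq_wronskian, alphaPoly_of_half_lt a h (by omega),
    alphaPoly_of_half_lt a h (by omega), hprod_i, hprod_j, ← mul_assoc, ← mul_assoc,
    wronskian_mul_right_mul_right, wronskian_C_mul_X_sub_C, hconst]

/-- For `k+1 ≤ i < j ≤ g−1` (with `k = ⌊g/2⌋`) and `h = 1,2`,
`ν_{ij,h}(t) = ((a_{i,h} − a_{j,h}) a_{i,h} a_{j,h} / A_2²) · (∏_{r≠i,j}(t − a_{r,h}))²`. -/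
theorem nuPoly_eq_of_half_lt (g : ℕ) (hg : 3 ≤ g) (a : ℕ → ℕ → ℂ)
    (ha : validParams g a) (h : ℕ) (hh : h = 1 ∨ h = 2)
    (i j : ℕ) (hi : g / 2 + 1 ≤ i) (hij : i < j) (hj : j ≤ g - 1) :
    nuPoly g a i j h =
      C ((a i h - a j h) * a i h * a j h / (Aprod g a 2) ^ 2) *
        (∏ r ∈ ((Finset.Icc 1 (g - 1)).erase i).erase j, (X - C (a r h))) ^ 2 :=
  nuPoly_eq_of_half_lt_general g a ha h hh i j hi hij hj
end

section
/- For every integer k ≥ 7, the 4×4 rational matrix with rows (−k(k−2), −k(k−1), −2(k−1)², −(2k−1)(k−2)), ((k−2)², 2(k−1)², −2(k−1)³, −(2k−1)(k−2)²), (−k(k−2), −k(k−1), 2(k−1)², (2k−1)(k−2)), ((k−2)², 2(k−1)², 2(k−1)³, (2k−1)(k−2)²) is invertible. -/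
/-!
The third and fourth rows agree with the first and second in the first two columns and are their
negatives in the last two, so the matrix is the block matrix `[[A, -B], [A, B]]` with `2 × 2`
blocks `A`, `B`. Subtracting the top block row from the bottom one gives `det = 4 det A det B`,
and both `2 × 2` determinants factor into linear factors in `k`, none of which vanishes for
`k ≥ 7`.
-/

open Matrix

theorem Matrix.det_fromBlocks_neg_self {n R : Type*} [Fintype n] [DecidableEq n] [CommRing R]
    (A B : Matrix n n R) :
    (fromBlocks A (-B) A B).det = 2 ^ Fintype.card n * A.det * B.det := by
  set E : Matrix (n ⊕ n) (n ⊕ n) R := fromBlocks 1 0 (-1) 1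
  have hE : E.det = 1 := by simp [E]
  have hrow : E * fromBlocks A (-B) A B = fromBlocks A (-B) 0 ((2 : R) • B) := by
    rw [fromBlocks_multiply]
    congr 1 <;> simp only [Matrix.one_mul, Matrix.zero_mul, Matrix.neg_mul, Matrix.mul_neg,
      two_smul] <;> abel
  calc (fromBlocks A (-B) A B).det
      = (E * fromBlocks A (-B) A B).det := by rw [det_mul, hE, one_mul]
    _ = 2 ^ Fintype.card n * A.det * B.det := by
      rw [hrow, det_fromBlocks_zero₂₁, det_smul]; ring

section EvenCase

variable {R : Type*} [CommRing R]

def evenCaseMatrix (x : R) : Matrix (Fin 4) (Fin 4) R :=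
  !![-x * (x - 2), -x * (x - 1), -2 * (x - 1) ^ 2, -(2 * x - 1) * (x - 2);
    (x - 2) ^ 2, 2 * (x - 1) ^ 2, -2 * (x - 1) ^ 3, -(2 * x - 1) * (x - 2) ^ 2;
    -x * (x - 2), -x * (x - 1), 2 * (x - 1) ^ 2, (2 * x - 1) * (x - 2);
    (x - 2) ^ 2, 2 * (x - 1) ^ 2, 2 * (x - 1) ^ 3, (2 * x - 1) * (x - 2) ^ 2]

def evenCaseBlockA (x : R) : Matrix (Fin 2) (Fin 2) R :=
  !![-x * (x - 2), -x * (x - 1); (x - 2) ^ 2, 2 * (x - 1) ^ 2]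

def evenCaseBlockB (x : R) : Matrix (Fin 2) (Fin 2) R :=
  !![2 * (x - 1) ^ 2, (2 * x - 1) * (x - 2); 2 * (x - 1) ^ 3, (2 * x - 1) * (x - 2) ^ 2]

theorem evenCaseMatrix_eq_reindex_fromBlocks (x : R) :
    evenCaseMatrix x = reindex finSumFinEquiv finSumFinEquiv
      (fromBlocks (evenCaseBlockA x) (-evenCaseBlockB x)
        (evenCaseBlockA x) (evenCaseBlockB x)) := by
  ext i j
  fin_cases i <;> fin_cases j <;>
    simp [evenCaseMatrix, evenCaseBlockA, evenCaseBlockB, finSumFinEquiv, Fin.addCases, -neg_sub]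

theorem det_evenCaseBlockA (x : R) : (evenCaseBlockA x).det = -x ^ 2 * (x - 1) * (x - 2) := by
  rw [evenCaseBlockA, det_fin_two_of]; ring

theorem det_evenCaseBlockB (x : R) :
    (evenCaseBlockB x).det = -2 * (x - 1) ^ 2 * (x - 2) * (2 * x - 1) := by
  rw [evenCaseBlockB, det_fin_two_of]; ring

theorem det_evenCaseMatrix (x : R) :
    (evenCaseMatrix x).det = 8 * x ^ 2 * (x - 1) ^ 3 * (x - 2) ^ 2 * (2 * x - 1) := by
  rw [evenCaseMatrix_eq_reindex_fromBlocks, det_reindex_self, det_fromBlocks_neg_self,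
    det_evenCaseBlockA, det_evenCaseBlockB, Fintype.card_fin]
  ring

theorem isUnit_evenCaseMatrix {K : Type*} [Field K] [CharZero K] {x : K} (h0 : x ≠ 0)
    (h1 : x ≠ 1) (h2 : x ≠ 2) (h3 : 2 * x ≠ 1) : IsUnit (evenCaseMatrix x) := by
  rw [isUnit_iff_isUnit_det, det_evenCaseMatrix, isUnit_iff_ne_zero]
  simp [h0, sub_eq_zero, h1, h2, h3]

end EvenCase

/-- For every integer `k ≥ 7`, the 4×4 rational matrix appearing in
the inductive step for even genus `g = 2k` is invertible. -/
theorem even_case_four_by_four_isUnit (k : ℤ) (hk : 7 ≤ k) :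
    IsUnit
      (!![-(k : ℚ) * (k - 2), -(k : ℚ) * (k - 1), -2 * ((k : ℚ) - 1) ^ 2,
            -(2 * (k : ℚ) - 1) * (k - 2);
          ((k : ℚ) - 2) ^ 2, 2 * ((k : ℚ) - 1) ^ 2, -2 * ((k : ℚ) - 1) ^ 3,
            -(2 * (k : ℚ) - 1) * (k - 2) ^ 2;
          -(k : ℚ) * (k - 2), -(k : ℚ) * (k - 1), 2 * ((k : ℚ) - 1) ^ 2,
            (2 * (k : ℚ) - 1) * (k - 2);
          ((k : ℚ) - 2) ^ 2, 2 * ((k : ℚ) - 1) ^ 2, 2 * ((k : ℚ) - 1) ^ 3,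
            (2 * (k : ℚ) - 1) * (k - 2) ^ 2]) := by
  have hk' : (7 : ℚ) ≤ k := by exact_mod_cast hk
  exact isUnit_evenCaseMatrix (x := (k : ℚ)) (by linarith : (0 : ℚ) < k).ne'
    (by linarith : (1 : ℚ) < k).ne' (by linarith : (2 : ℚ) < k).ne'
    (by linarith : (1 : ℚ) < 2 * k).ne'
end

section
/- For every integer k ≥ 6, the 4×4 rational matrix with rows (−(k+1)(k−1), −(k+1)(k−2), −(k−2), −(k−1)), (−(k²−2k−1), −(k²−4k−2), −(2k−2), −(2k−1)), ((k+1)(k−1), (k+1)(k−2), −(k−2), −(k−1)), ((k²−2k−1), (k²−4k−2), −(2k−2), −(2k−1)) is invertible. -/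
/-!
The matrix has the block shape `[[-A, B], [A, B]]` with `2 × 2` blocks `A` and `B`. Adding the
first block row to the second turns it into `[[-A, B], [0, 2B]]`, so its determinant is
`4 · det A · det B = 4 k² (k + 1)²`, which is nonzero as soon as `k ∉ {0, -1}`.
-/

open Matrix

namespace Matrix

variable {R n : Type*} [CommRing R] [Fintype n] [DecidableEq n]

theorem det_fromBlocks_neg_self_s12 (A B : Matrix n n R) :
    (fromBlocks (-A) B A B).det = (-2) ^ Fintype.card n * A.det * B.det := by
  let rowOp : Matrix (n ⊕ n) (n ⊕ n) R := fromBlocks 1 0 1 1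
  have h_rowOp : rowOp * fromBlocks (-A) B A B = fromBlocks (-A) B 0 ((2 : R) • B) := by
    rw [fromBlocks_multiply, two_smul]
    simp
  have h_rowOp_det : rowOp.det = 1 := by
    simp [rowOp]
  calc (fromBlocks (-A) B A B).det = (rowOp * fromBlocks (-A) B A B).det := by
        rw [det_mul, h_rowOp_det, one_mul]
    _ = (-2) ^ Fintype.card n * A.det * B.det := by
      rw [h_rowOp, det_fromBlocks_zero₂₁, det_neg, det_smul, neg_eq_neg_one_mul (2 : R), mul_pow]
      ring

end Matrix

section OddCase

variable (k : ℚ)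

def oddCaseBlockA : Matrix (Fin 2) (Fin 2) ℚ :=
  !![(k + 1) * (k - 1), (k + 1) * (k - 2); k ^ 2 - 2 * k - 1, k ^ 2 - 4 * k - 2]

def oddCaseBlockB : Matrix (Fin 2) (Fin 2) ℚ :=
  !![-(k - 2), -(k - 1); -(2 * k - 2), -(2 * k - 1)]

theorem det_oddCaseBlockA : (oddCaseBlockA k).det = -k * (k + 1) ^ 2 := by
  rw [oddCaseBlockA, det_fin_two_of]
  ring

theorem det_oddCaseBlockB : (oddCaseBlockB k).det = -k := by
  rw [oddCaseBlockB, det_fin_two_of]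
  ring

theorem det_oddCaseBlocks :
    (fromBlocks (-oddCaseBlockA k) (oddCaseBlockB k) (oddCaseBlockA k) (oddCaseBlockB k)).det =
      4 * k ^ 2 * (k + 1) ^ 2 := by
  rw [det_fromBlocks_neg_self_s12, det_oddCaseBlockA, det_oddCaseBlockB, Fintype.card_fin]
  ring

end OddCase

theorem isUnit_oddCaseBlocks {k : ℚ} (hk₀ : k ≠ 0) (hk₁ : k + 1 ≠ 0) :
    IsUnit (fromBlocks (-oddCaseBlockA k) (oddCaseBlockB k) (oddCaseBlockA k) (oddCaseBlockB k)) := by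
  rw [isUnit_iff_isUnit_det, det_oddCaseBlocks]
  exact (by positivity : 4 * k ^ 2 * (k + 1) ^ 2 ≠ 0).isUnit

/-- For every integer `k ≥ 6`, the 4×4 rational matrix appearing in
the inductive step for odd genus `g = 2k+1` is invertible. -/
theorem odd_case_four_by_four_isUnit (k : ℤ) (hk : 6 ≤ k) :
    IsUnit
      (!![-((k : ℚ) + 1) * (k - 1), -((k : ℚ) + 1) * (k - 2), -((k : ℚ) - 2),
            -((k : ℚ) - 1);
          -((k : ℚ) ^ 2 - 2 * k - 1), -((k : ℚ) ^ 2 - 4 * k - 2), -(2 * (k : ℚ) - 2),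
            -(2 * (k : ℚ) - 1);
          ((k : ℚ) + 1) * (k - 1), ((k : ℚ) + 1) * (k - 2), -((k : ℚ) - 2),
            -((k : ℚ) - 1);
          ((k : ℚ) ^ 2 - 2 * k - 1), ((k : ℚ) ^ 2 - 4 * k - 2), -(2 * (k : ℚ) - 2),
            -(2 * (k : ℚ) - 1)]) := by
  have hk₀ : (k : ℚ) ≠ 0 := by exact_mod_cast (by omega : k ≠ 0)
  have hk₁ : (k : ℚ) + 1 ≠ 0 := by exact_mod_cast (by omega : k + 1 ≠ 0)
  have h_blocks := (isUnit_oddCaseBlocks hk₀ hk₁).map (reindexAlgEquiv ℚ ℚ finSumFinEquiv)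
  convert h_blocks using 1
  ext i j
  fin_cases i <;> fin_cases j <;>
    simp [oddCaseBlockA, oddCaseBlockB, finSumFinEquiv, Fin.addCases, Fin.castLT, Fin.subNat] <;>
    ring
end

section
/- Let g = 2k+1 ≥ 13 be odd and let a be a complex number with a ≠ 0 and a ≠ 1. With the parameter choice a_{i,1} = i·a and a_{i,2} = i for i = 1, …, g−1 (so A_2 = (g−1)!), the torsion value at the node P_{k+1} satisfies τ_{k−1,k+2,k+1} = (−4(k+1)(k+2) a^{g−2} / A_2) · ∏_{ℓ=1, ℓ∉{k−1,k+1,k+2}}^{g−1} (k+1 − ℓ)², and in particular τ_{k−1,k+2,k+1} ≠ 0. -/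
open Polynomial Finset

/-- The parameter choice `a_{i,1} = i·a`, `a_{i,2} = i`. -/
noncomputable def aAP (a : ℂ) : ℕ → ℕ → ℂ := fun i h =>
  if h = 1 then (i : ℂ) * a else (i : ℂ)

/-!
For `i ≤ ⌊g/2⌋ < j` and a node `m ∉ {i, j}`, the derivatives `α'_{i,h}(a_{m,h})` and
`α'_{j,h}(a_{m,h})` are Lagrange node values `∏_{r ≠ ·, m} (a_{m,h} − a_{r,h})`, scaled by
`a_{m,h}` and by `−d_h a_{j,h}/A_h` respectively. Both contain the product over
`r ∉ {i, j, m}`, so `τ_{ij,m}` is that common product for `h = 1` times the one for `h = 2`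
times a `2 × 2` expression in the remaining factors. For `a_{r,1} = r a`, `a_{r,2} = r` the
common products are `a^{g-4} P` and `P` with `P = ∏_{ℓ ∉ {k-1,k+1,k+2}} (k + 1 − ℓ) ≠ 0`, and
since `A_1 = a^{g-1} (g-1)!`, `A_2 = (g-1)!`, the `2 × 2` expression equals
`−4 (k+1)(k+2) a² / (g-1)!`.
-/

open Lagrange

namespace Lagrange

variable {R ι : Type*} [CommRing R] [DecidableEq ι] {s : Finset ι} {v : ι → R} {i : ι}

theorem eval_node_derivative_X_mul_nodal (hi : i ∈ s) :
    (derivative (X * nodal s v)).eval (v i) = v i * (nodal (s.erase i) v).eval (v i) := by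
  rw [derivative_mul, derivative_X, one_mul, eval_add, eval_mul, eval_X,
    eval_nodal_at_node hi, eval_nodal_derivative_eval_node_eq hi, zero_add]

end Lagrange

theorem prod_Icc_natCast {R : Type*} [CommSemiring R] (n : ℕ) :
    ∏ i ∈ Icc 1 n, (i : R) = n.factorial := by
  rw [← Nat.cast_prod, ← Ico_add_one_right_eq_Icc, prod_Ico_id_eq_factorial]

theorem prod_natCast_sub_ne_zero {R : Type*} [CommRing R] [IsDomain R] [CharZero R]
    {s : Finset ℕ} {m : ℕ} (hm : m ∉ s) : ∏ r ∈ s, ((m : R) - r) ≠ 0 :=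
  prod_ne_zero_iff.2 fun _ hr =>
    sub_ne_zero.2 <| Nat.cast_injective.ne (ne_of_mem_of_not_mem hr hm).symm

/-- The scalar `−d_h a_{j,h} / A_h` in front of `α_{j,h}` for `j > ⌊g/2⌋`. -/
noncomputable def alphaScale (g : ℕ) (a : ℕ → ℕ → ℂ) (j h : ℕ) : ℂ :=
  -(dcoef g a h * a j h / Aprod g a h)

section alphaPoly

variable {g : ℕ} {a : ℕ → ℕ → ℂ} {i j m : ℕ} (h : ℕ)

theorem alphaPoly_of_le (hi : i ≤ g / 2) :
    alphaPoly g a i h = X * nodal ((Icc 1 (g - 1)).erase i) (a · h) :=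
  if_pos hi

theorem alphaPoly_of_lt (hi : g / 2 < i) :
    alphaPoly g a i h = C (alphaScale g a i h) * nodal ((Icc 1 (g - 1)).erase i) (a · h) :=
  if_neg hi.not_ge

theorem eval_derivative_alphaPoly_of_le (hi : i ≤ g / 2) (hm : m ∈ (Icc 1 (g - 1)).erase i) :
    (derivative (alphaPoly g a i h)).eval (a m h) =
      a m h * ∏ r ∈ ((Icc 1 (g - 1)).erase i).erase m, (a m h - a r h) := by
  rw [alphaPoly_of_le h hi, eval_node_derivative_X_mul_nodal (v := (a · h)) hm, eval_nodal]

theorem eval_derivative_alphaPoly_of_lt (hi : g / 2 < i) (hm : m ∈ (Icc 1 (g - 1)).erase i) :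
    (derivative (alphaPoly g a i h)).eval (a m h) =
      alphaScale g a i h * ∏ r ∈ ((Icc 1 (g - 1)).erase i).erase m, (a m h - a r h) := by
  rw [alphaPoly_of_lt h hi, derivative_C_mul, eval_mul, eval_C,
    eval_nodal_derivative_eval_node_eq (v := (a · h)) hm, eval_nodal]

theorem tauVal_of_le_of_lt (hi : i ≤ g / 2) (hj : g / 2 < j) (hiS : i ∈ Icc 1 (g - 1))
    (hjS : j ∈ Icc 1 (g - 1)) (hmS : m ∈ Icc 1 (g - 1)) (hmi : m ≠ i) (hmj : m ≠ j) :
    tauVal g a i j m =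
      (∏ r ∈ (((Icc 1 (g - 1)).erase i).erase m).erase j, (a m 1 - a r 1)) *
        (∏ r ∈ (((Icc 1 (g - 1)).erase i).erase m).erase j, (a m 2 - a r 2)) *
        (alphaScale g a j 1 * (a m 1 - a i 1) * (a m 2 * (a m 2 - a j 2)) -
          a m 1 * (a m 1 - a j 1) * (alphaScale g a j 2 * (a m 2 - a i 2))) := by
  have hij : i ≠ j := by omega
  have hm_le : m ≤ g := by have := (mem_Icc.1 hmS).2; omega
  have hm_ne : m ≠ g := by have := (mem_Icc.1 hmS).2; omega
  have prod_i (h : ℕ) : ∏ r ∈ ((Icc 1 (g - 1)).erase i).erase m, (a m h - a r h) =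
      (a m h - a j h) * ∏ r ∈ (((Icc 1 (g - 1)).erase i).erase m).erase j, (a m h - a r h) :=
    (mul_prod_erase _ _ (mem_erase.2 ⟨hmj.symm, mem_erase.2 ⟨hij.symm, hjS⟩⟩)).symm
  have prod_j (h : ℕ) : ∏ r ∈ ((Icc 1 (g - 1)).erase j).erase m, (a m h - a r h) =
      (a m h - a i h) * ∏ r ∈ (((Icc 1 (g - 1)).erase i).erase m).erase j, (a m h - a r h) := by
    have erase_comm : (((Icc 1 (g - 1)).erase j).erase m).erase i =
        (((Icc 1 (g - 1)).erase i).erase m).erase j := by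
      ext; simp only [mem_erase]; tauto
    rw [← mul_prod_erase _ _ (mem_erase.2 ⟨hmi.symm, mem_erase.2 ⟨hij, hiS⟩⟩), erase_comm]
  simp only [tauVal, if_pos hm_le, if_neg hm_ne]
  rw [eval_derivative_alphaPoly_of_le _ hi (mem_erase.2 ⟨hmi, hmS⟩),
    eval_derivative_alphaPoly_of_le _ hi (mem_erase.2 ⟨hmi, hmS⟩),
    eval_derivative_alphaPoly_of_lt _ hj (mem_erase.2 ⟨hmj, hmS⟩),
    eval_derivative_alphaPoly_of_lt _ hj (mem_erase.2 ⟨hmj, hmS⟩),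
    prod_i, prod_i, prod_j, prod_j]
  ring

end alphaPoly

section aAP

variable {a : ℂ} {g : ℕ}

@[simp] theorem aAP_one (i : ℕ) : aAP a i 1 = i * a := if_pos rfl

@[simp] theorem aAP_two (i : ℕ) : aAP a i 2 = i := if_neg (by norm_num)

theorem Aprod_aAP_two : Aprod g (aAP a) 2 = (g - 1).factorial := by
  simp only [Aprod, aAP_two, prod_Icc_natCast]

theorem Aprod_aAP_one : Aprod g (aAP a) 1 = (g - 1).factorial * a ^ (g - 1) := by
  simp only [Aprod, aAP_one, prod_mul_distrib, prod_Icc_natCast, prod_const, Nat.card_Icc,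
    Nat.add_sub_cancel]

theorem alphaScale_aAP_one (ha : a ≠ 0) (j : ℕ) :
    alphaScale g (aAP a) j 1 = j * a / (g - 1).factorial := by
  have : ((g - 1).factorial : ℂ) ≠ 0 := by exact_mod_cast (g - 1).factorial_ne_zero
  rw [alphaScale, dcoef, if_pos rfl, Aprod_aAP_one, Aprod_aAP_two, aAP_one]
  field_simp

theorem alphaScale_aAP_two (j : ℕ) :
    alphaScale g (aAP a) j 2 = -(j / (g - 1).factorial) := by
  rw [alphaScale, dcoef, if_neg (by norm_num), Aprod_aAP_two, aAP_two, one_mul]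

theorem prod_sub_aAP_one (s : Finset ℕ) (m : ℕ) :
    ∏ r ∈ s, (aAP a m 1 - aAP a r 1) = a ^ #s * ∏ r ∈ s, ((m : ℂ) - r) := by
  simp only [aAP_one, ← sub_mul, prod_mul_distrib, prod_const]
  exact mul_comm _ _

theorem tauVal_aAP_middle_node {k : ℕ} (hgk : g = 2 * k + 1) (hk : 2 ≤ k) (ha : a ≠ 0) :
    tauVal g (aAP a) (k - 1) (k + 2) (k + 1) =
      -4 * ((k : ℂ) + 1) * ((k : ℂ) + 2) * a ^ (g - 2) / (g - 1).factorial *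
        (∏ ℓ ∈ (((Icc 1 (g - 1)).erase (k - 1)).erase (k + 1)).erase (k + 2),
          ((k : ℂ) + 1 - ℓ)) ^ 2 := by
  have hcard : #((((Icc 1 (g - 1)).erase (k - 1)).erase (k + 1)).erase (k + 2)) = g - 4 := by
    rw [card_erase_of_mem, card_erase_of_mem, card_erase_of_mem, Nat.card_Icc]
    · omega
    all_goals simp only [mem_erase, mem_Icc]; omega
  rw [tauVal_of_le_of_lt (by omega) (by omega) (mem_Icc.2 ⟨by omega, by omega⟩)
    (mem_Icc.2 ⟨by omega, by omega⟩) (mem_Icc.2 ⟨by omega, by omega⟩) (by omega) (by omega),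
    prod_sub_aAP_one, alphaScale_aAP_one ha, alphaScale_aAP_two, hcard]
  obtain ⟨e, he2, he4⟩ : ∃ e, g - 2 = e + 2 ∧ g - 4 = e := ⟨g - 4, by omega, rfl⟩
  rw [he2, he4]
  simp only [aAP_one, aAP_two]
  push_cast [hk.trans' one_le_two]
  field_simp
  ring

end aAP

theorem tauVal_odd_node_general (g k : ℕ) (hgk : g = 2 * k + 1) (hg : 13 ≤ g)
    (a : ℂ) (ha0 : a ≠ 0) :
    tauVal g (aAP a) (k - 1) (k + 2) (k + 1) =
      -4 * ((k : ℂ) + 1) * ((k : ℂ) + 2) * a ^ (g - 2) / (Nat.factorial (g - 1) : ℂ) *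
        ∏ ℓ ∈ (((Finset.Icc 1 (g - 1)).erase (k - 1)).erase (k + 1)).erase (k + 2),
          ((k : ℂ) + 1 - (ℓ : ℂ)) ^ 2 ∧
    tauVal g (aAP a) (k - 1) (k + 2) (k + 1) ≠ 0 := by
  have key := tauVal_aAP_middle_node hgk (by omega) ha0
  refine ⟨by rw [key, prod_pow], ?_⟩
  have hN : ((g - 1).factorial : ℂ) ≠ 0 := by exact_mod_cast (g - 1).factorial_ne_zero
  have hk1 : (k : ℂ) + 1 ≠ 0 := by exact_mod_cast k.succ_ne_zero
  have hk2 : (k : ℂ) + 2 ≠ 0 := by exact_mod_cast (k + 1).succ_ne_zero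
  have hP := prod_natCast_sub_ne_zero (R := ℂ)
    (fun h => (mem_erase.1 (mem_of_mem_erase h)).1 rfl :
      k + 1 ∉ (((Icc 1 (g - 1)).erase (k - 1)).erase (k + 1)).erase (k + 2))
  push_cast at hP
  rw [key]
  exact mul_ne_zero (div_ne_zero (by simp [ha0, hk1, hk2]) hN) (pow_ne_zero 2 hP)

/-- Let `g = 2k+1 ≥ 13` be odd and `a ∈ ℂ`, `a ≠ 0`, `a ≠ 1`. With
`a_{i,1} = i·a`, `a_{i,2} = i` (so `A_2 = (g−1)!`), the torsion value at the node
`P_{k+1}` satisfies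
`τ_{k−1,k+2,k+1} = (−4(k+1)(k+2)a^{g−2}/A_2) · ∏_{ℓ≠k−1,k+1,k+2}(k+1 − ℓ)²`, and in
particular `τ_{k−1,k+2,k+1} ≠ 0`. -/
theorem tauVal_odd_node (g k : ℕ) (hgk : g = 2 * k + 1) (hg : 13 ≤ g)
    (a : ℂ) (ha0 : a ≠ 0) (ha1 : a ≠ 1) :
    tauVal g (aAP a) (k - 1) (k + 2) (k + 1) =
      -4 * ((k : ℂ) + 1) * ((k : ℂ) + 2) * a ^ (g - 2) / (Nat.factorial (g - 1) : ℂ) *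
        ∏ ℓ ∈ (((Finset.Icc 1 (g - 1)).erase (k - 1)).erase (k + 1)).erase (k + 2),
          ((k : ℂ) + 1 - (ℓ : ℂ)) ^ 2 ∧
    tauVal g (aAP a) (k - 1) (k + 2) (k + 1) ≠ 0 :=
  tauVal_odd_node_general g k hgk hg a ha0
end
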